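/- Let φ(x) = ½xᵀQx + qᵀx with Q symmetric with spectrum in [m, L], 0 < m ≤ L, and g proper closed convex, γ ∈ (0, 1/L). Then the forward-backward envelope M(x) = φ(x) − (γ/2)‖∇φ(x)‖² + g^γ(x − γ∇φ(x)) is convex; more precisely the smooth part x ↦ φ(x) − (γ/2)‖Qx + q‖² is m(1 − γL)-strongly convex, and z ↦ g^γ applied to the affine map x ↦ (I − γQ)x − γq is convex. -/

import Mathlib

/-!
The smooth part is a quadratic whose curvature form is `⟪z, Q z⟫ - γ ‖Q z‖²`. Since
`0 ≤ Q ≤ L` gives `‖Q z‖² ≤ L ⟪z, Q z⟫`, this form dominates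
`(1 - γ L) ⟪z, Q z⟫ ≥ m (1 - γ L) ‖z‖²`.
The Moreau envelope is the partial infimum over `y` of the jointly convex function
`(y, z) ↦ g y + ‖y - z‖² / (2γ)`, hence convex; the infimum is a genuine one because a finite
convex function on `ℝⁿ` has a minorant `α - β ‖y‖`, which the quadratic term absorbs.
-/

/-- The Moreau envelope `g^γ(z) = inf_y { g(y) + ‖y - z‖²/(2γ) }`. -/
noncomputable def moreau {n : ℕ} (g : EuclideanSpace ℝ (Fin n) → ℝ) (γ : ℝ)
    (z : EuclideanSpace ℝ (Fin n)) : ℝ :=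
  ⨅ y : EuclideanSpace ℝ (Fin n), (g y + ‖y - z‖ ^ 2 / (2 * γ))

open Set

local notation "⟪" x ", " y "⟫" => @inner ℝ _ _ x y

namespace LinearMap.IsSymmetric

variable {E : Type*} [NormedAddCommGroup E] [InnerProductSpace ℝ E] {T : E →ₗ[ℝ] E}

lemma inner_map_self_smul_add_smul (hT : T.IsSymmetric) (x y : E) {a b : ℝ} (hab : a + b = 1) :
    ⟪a • x + b • y, T (a • x + b • y)⟫
      = a * ⟪x, T x⟫ + b * ⟪y, T y⟫ - a * b * ⟪x - y, T (x - y)⟫ := by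
  obtain rfl : b = 1 - a := by linarith
  have hyx : ⟪y, T x⟫ = ⟪x, T y⟫ := by rw [← hT, real_inner_comm]
  simp only [map_add, map_smul, map_sub, inner_add_left, inner_add_right, inner_sub_left,
    inner_sub_right, real_inner_smul_left, real_inner_smul_right, hyx]
  ring

lemma norm_apply_sq_le (hT : T.IsSymmetric) {L : ℝ} (hL : 0 < L)
    (hpos : ∀ x, 0 ≤ ⟪x, T x⟫) (hle : ∀ x, ⟪x, T x⟫ ≤ L * ‖x‖ ^ 2) (x : E) :
    ‖T x‖ ^ 2 ≤ L * ⟪x, T x⟫ := by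
  have hw : ⟪L • x - T x, T (L • x - T x)⟫
      = L ^ 2 * ⟪x, T x⟫ - 2 * L * ‖T x‖ ^ 2 + ⟪T x, T (T x)⟫ := by
    have hxTT : ⟪x, T (T x)⟫ = ‖T x‖ ^ 2 := by rw [← hT, real_inner_self_eq_norm_sq]
    simp only [map_sub, map_smul, inner_sub_left, inner_sub_right, real_inner_smul_left,
      real_inner_smul_right, hxTT, real_inner_self_eq_norm_sq]
    ring
  -- `0 ≤ ⟪w, T w⟫` at `w = L • x - T x`, and `⟪T x, T (T x)⟫ ≤ L ‖T x‖²`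
  nlinarith [hpos (L • x - T x), hle (T x)]

end LinearMap.IsSymmetric

section InnerProductSpace

variable {E : Type*} [NormedAddCommGroup E] [InnerProductSpace ℝ E]

lemma norm_smul_add_smul_sq (x y : E) {a b : ℝ} (hab : a + b = 1) :
    ‖a • x + b • y‖ ^ 2 = a * ‖x‖ ^ 2 + b * ‖y‖ ^ 2 - a * b * ‖x - y‖ ^ 2 := by
  simpa only [LinearMap.id_apply, real_inner_self_eq_norm_sq] using
    LinearMap.IsSymmetric.id.inner_map_self_smul_add_smul x y hab

lemma strongConvexOn_quadratic_sub_sq_norm_grad {Q : E →ₗ[ℝ] E} (hQ : Q.IsSymmetric) (q : E)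
    {m L γ : ℝ} (hm : 0 ≤ m) (hL : 0 < L) (hγ : 0 ≤ γ) (hγL : γ * L ≤ 1)
    (hlow : ∀ x, m * ‖x‖ ^ 2 ≤ ⟪x, Q x⟫) (hupp : ∀ x, ⟪x, Q x⟫ ≤ L * ‖x‖ ^ 2) :
    StrongConvexOn univ (m * (1 - γ * L))
      (fun x => (1 / 2 * ⟪x, Q x⟫ + ⟪q, x⟫) - γ / 2 * ‖Q x + q‖ ^ 2) := by
  refine ⟨convex_univ, fun x _ y _ a b ha hb hab => ?_⟩
  have hgrad : Q (a • x + b • y) + q = a • (Q x + q) + b • (Q y + q) := by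
    obtain rfl : b = 1 - a := by linarith
    simp only [map_add, map_smul]
    module
  have hcurv : m * (1 - γ * L) * ‖x - y‖ ^ 2 ≤ ⟪x - y, Q (x - y)⟫ - γ * ‖Q (x - y)‖ ^ 2 := by
    have hTz := hQ.norm_apply_sq_le hL (fun z => le_trans (by positivity) (hlow z)) hupp (x - y)
    nlinarith [hlow (x - y), mul_le_mul_of_nonneg_left hTz hγ]
  simp only [smul_eq_mul, hgrad, norm_smul_add_smul_sq _ _ hab,
    hQ.inner_map_self_smul_add_smul x y hab, inner_add_right, real_inner_smul_right]
  rw [show Q x + q - (Q y + q) = Q (x - y) by simp]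
  nlinarith [mul_le_mul_of_nonneg_left hcurv (mul_nonneg ha hb)]

end InnerProductSpace

lemma ConvexOn.convexOn_ciInf {E F : Type*} [AddCommGroup E] [Module ℝ E] [AddCommGroup F]
    [Module ℝ F] {h : E × F → ℝ} (hh : ConvexOn ℝ univ h)
    (hbdd : ∀ z, BddBelow (range fun y => h (y, z))) :
    ConvexOn ℝ univ fun z => ⨅ y, h (y, z) := by
  refine ⟨convex_univ, fun z₁ _ z₂ _ a b ha hb hab => le_of_forall_pos_le_add fun ε hε => ?_⟩
  obtain ⟨y₁, hy₁⟩ := exists_lt_of_ciInf_lt (lt_add_of_pos_right (⨅ y, h (y, z₁)) hε)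
  obtain ⟨y₂, hy₂⟩ := exists_lt_of_ciInf_lt (lt_add_of_pos_right (⨅ y, h (y, z₂)) hε)
  calc ⨅ y, h (y, a • z₁ + b • z₂)
      ≤ h (a • (y₁, z₁) + b • (y₂, z₂)) := ciInf_le (hbdd _) (a • y₁ + b • y₂)
    _ ≤ a * h (y₁, z₁) + b * h (y₂, z₂) := hh.2 trivial trivial ha hb hab
    _ ≤ a * ((⨅ y, h (y, z₁)) + ε) + b * ((⨅ y, h (y, z₂)) + ε) := by gcongr
    _ = a * (⨅ y, h (y, z₁)) + b * (⨅ y, h (y, z₂)) + ε := by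
      linear_combination ε * hab

lemma ConvexOn.exists_sub_mul_norm_le {E : Type*} [NormedAddCommGroup E] [NormedSpace ℝ E]
    [FiniteDimensional ℝ E] {g : E → ℝ} (hg : ConvexOn ℝ univ g) :
    ∃ α β : ℝ, 0 ≤ β ∧ ∀ y, α - β * ‖y‖ ≤ g y := by
  obtain ⟨u₀, -, hmin⟩ := (isCompact_closedBall (0 : E) 1).exists_isMinOn
    ⟨0, by simp⟩ ((hg.continuousOn isOpen_univ).mono (subset_univ _))
  have hu₀ : g u₀ ≤ g 0 := hmin (by simp)
  refine ⟨g u₀, g 0 - g u₀, by linarith, fun y => ?_⟩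
  rcases le_or_gt ‖y‖ 1 with hy | hy
  · have : g u₀ ≤ g y := hmin (by simpa using hy)
    nlinarith [norm_nonneg y]
  · set s := ‖y‖
    have hs : 0 < s := by linarith
    -- convexity on the segment from `0` to `y` pushes the bound at `s⁻¹ • y` out linearly
    have hseg : g (s⁻¹ • y) ≤ s⁻¹ * g y + (1 - s⁻¹) * g 0 := by
      simpa using hg.2 (mem_univ y) (mem_univ 0) (inv_nonneg.2 hs.le)
        (sub_nonneg.2 (inv_le_one_of_one_le₀ hy.le)) (add_sub_cancel _ _)
    have hmin_y : g u₀ ≤ g (s⁻¹ • y) := hmin (by simp [norm_smul, s, hs.ne'])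
    have hexpand : s * (s⁻¹ * g y + (1 - s⁻¹) * g 0) = g y + (s - 1) * g 0 := by field_simp
    nlinarith [mul_le_mul_of_nonneg_left (hmin_y.trans hseg) hs.le]

section Moreau

variable {n : ℕ} {g : EuclideanSpace ℝ (Fin n) → ℝ} {γ : ℝ}

lemma bddBelow_range_moreau (hg : ConvexOn ℝ univ g) (hγ : 0 < γ)
    (z : EuclideanSpace ℝ (Fin n)) : BddBelow (range fun y => g y + ‖y - z‖ ^ 2 / (2 * γ)) := by
  obtain ⟨α, β, hβ, hαβ⟩ := hg.exists_sub_mul_norm_le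
  refine ⟨α - β * ‖z‖ - γ * β ^ 2 / 2, ?_⟩
  rintro _ ⟨y, rfl⟩
  have htri : ‖y‖ ≤ ‖y - z‖ + ‖z‖ := norm_le_norm_sub_add y z
  have hsq : β * ‖y - z‖ - γ * β ^ 2 / 2 ≤ ‖y - z‖ ^ 2 / (2 * γ) := by
    rw [le_div_iff₀ (by positivity)]
    nlinarith [sq_nonneg (‖y - z‖ - γ * β)]
  nlinarith [hαβ y, mul_le_mul_of_nonneg_left htri hβ]

lemma convexOn_moreau (hg : ConvexOn ℝ univ g) (hγ : 0 < γ) : ConvexOn ℝ univ (moreau g γ) := by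
  have hsq : ConvexOn ℝ univ fun p : EuclideanSpace ℝ (Fin n) × EuclideanSpace ℝ (Fin n) =>
      ‖p.1 - p.2‖ ^ 2 :=
    ((convexOn_univ_norm (E := EuclideanSpace ℝ (Fin n))).pow (fun x _ => norm_nonneg x) 2)
      |>.comp_linearMap (LinearMap.fst ℝ _ _ - LinearMap.snd ℝ _ _)
      |>.subset (subset_univ _) convex_univ
      |>.congr fun p _ => by simp
  have hjoint : ConvexOn ℝ univ fun p : EuclideanSpace ℝ (Fin n) × EuclideanSpace ℝ (Fin n) =>
      g p.1 + ‖p.1 - p.2‖ ^ 2 / (2 * γ) :=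
    (hg.comp_linearMap (LinearMap.fst ℝ _ _)).add (hsq.smul (by positivity : 0 ≤ (2 * γ)⁻¹))
      |>.congr fun p _ => by simp [div_eq_inv_mul]
  exact hjoint.convexOn_ciInf (bddBelow_range_moreau hg hγ)

end Moreau

theorem stmt_18_general {n : ℕ}
    (Q : EuclideanSpace ℝ (Fin n) →L[ℝ] EuclideanSpace ℝ (Fin n))
    (q : EuclideanSpace ℝ (Fin n))
    (g : EuclideanSpace ℝ (Fin n) → ℝ)
    (m L γ : ℝ) (hm : 0 < m) (hmL : m ≤ L) (hγ0 : 0 < γ) (hγL : γ < 1 / L)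
    (hQ : IsSelfAdjoint Q)
    (hlow : ∀ x, m * ‖x‖ ^ 2 ≤ (inner ℝ x (Q x) : ℝ))
    (hupp : ∀ x, (inner ℝ x (Q x) : ℝ) ≤ L * ‖x‖ ^ 2)
    (hgconv : ConvexOn ℝ Set.univ g) :
    StrongConvexOn Set.univ (m * (1 - γ * L))
        (fun x => (1 / 2 * (inner ℝ x (Q x) : ℝ) + (inner ℝ q x : ℝ)) -
          γ / 2 * ‖Q x + q‖ ^ 2) ∧
      ConvexOn ℝ Set.univ (fun x => moreau g γ (x - γ • (Q x + q))) ∧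
      ConvexOn ℝ Set.univ
        (fun x => (1 / 2 * (inner ℝ x (Q x) : ℝ) + (inner ℝ q x : ℝ)) -
          γ / 2 * ‖Q x + q‖ ^ 2 + moreau g γ (x - γ • (Q x + q))) := by
  have hL : 0 < L := hm.trans_le hmL
  have hγL' : γ * L < 1 := (lt_div_iff₀ hL).1 hγL
  have hsmooth := strongConvexOn_quadratic_sub_sq_norm_grad hQ.isSymmetric q hm.le hL hγ0.le
    hγL'.le hlow hupp
  have henv : ConvexOn ℝ univ fun x => moreau g γ (x - γ • (Q x + q)) :=
    ((convexOn_moreau hgconv hγ0).translate_right (-(γ • q))).comp_linearMap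
        (LinearMap.id - γ • (Q : EuclideanSpace ℝ (Fin n) →ₗ[ℝ] EuclideanSpace ℝ (Fin n)))
      |>.congr fun x _ => by simp only [Function.comp_apply]; congr 1; simp; module
  have hconvex := strongConvexOn_zero.1 (hsmooth.mono (by nlinarith))
  exact ⟨hsmooth, henv, hconvex.add henv⟩

/-- For the quadratic `φ(x) = ½ xᵀQx + qᵀx` with `Q` symmetric with spectrum
in `[m, L]`, `0 < m ≤ L`, `γ ∈ (0, 1/L)`, the forward-backward envelope
`M(x) = φ(x) - (γ/2)‖∇φ(x)‖² + g^γ(x - γ∇φ(x))` is convex; more precisely,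
its smooth part is `m(1 - γL)`-strongly convex and the Moreau-envelope part
composed with the affine map `x ↦ (I - γQ)x - γq` is convex. -/
theorem stmt_18 {n : ℕ}
    (Q : EuclideanSpace ℝ (Fin n) →L[ℝ] EuclideanSpace ℝ (Fin n))
    (q : EuclideanSpace ℝ (Fin n))
    (g : EuclideanSpace ℝ (Fin n) → ℝ)
    (m L γ : ℝ) (hm : 0 < m) (hmL : m ≤ L) (hγ0 : 0 < γ) (hγL : γ < 1 / L)
    (hQ : IsSelfAdjoint Q)
    (hlow : ∀ x, m * ‖x‖ ^ 2 ≤ (inner ℝ x (Q x) : ℝ))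
    (hupp : ∀ x, (inner ℝ x (Q x) : ℝ) ≤ L * ‖x‖ ^ 2)
    (hgconv : ConvexOn ℝ Set.univ g) (hglsc : LowerSemicontinuous g) :
    StrongConvexOn Set.univ (m * (1 - γ * L))
        (fun x => (1 / 2 * (inner ℝ x (Q x) : ℝ) + (inner ℝ q x : ℝ)) -
          γ / 2 * ‖Q x + q‖ ^ 2) ∧
      ConvexOn ℝ Set.univ (fun x => moreau g γ (x - γ • (Q x + q))) ∧
      ConvexOn ℝ Set.univ
        (fun x => (1 / 2 * (inner ℝ x (Q x) : ℝ) + (inner ℝ q x : ℝ)) -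
          γ / 2 * ‖Q x + q‖ ^ 2 + moreau g γ (x - γ • (Q x + q))) :=
  stmt_18_general Q q g m L γ hm hmL hγ0 hγL hQ hlow hupp hgconv
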